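/- Let ε ∈ (0,1) and α > 0. Let Y be a square-integrable real random variable with mean 1 and standard deviation at most α, and let R be uniform on [1−ε, 1+ε], independent of Y. Then there exists a random variable W taking exactly two values with probability 1, with mean 1 and standard deviation exactly α, and independent of R, such that P(WR ≤ 1+ε) ≤ P(YR ≤ 1+ε). -/

import Mathlib

open MeasureTheory ProbabilityTheory Real

/-- The uniform probability measure on the interval `[a, b]`. -/
noncomputable def uniformIcc (a b : ℝ) : Measure ℝ :=
  (ENNReal.ofReal (b - a))⁻¹ • (MeasureTheory.volume.restrict (Set.Icc a b))

/-- The median of `2*n+1` real values: their `(n+1)`-st smallest value. -/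
noncomputable def medianOf {n : ℕ} (v : Fin (2 * n + 1) → ℝ) : ℝ :=
  (Multiset.sort (↑(List.ofFn v)) (· ≤ ·)).get ⟨n, by simp; omega⟩

/-- The nuisance factor `f(ε) = (1+ε)/((1-ε)² (1+ε-ε²))`. -/
noncomputable def nuisance (ε : ℝ) : ℝ := (1 + ε) / ((1 - ε) ^ 2 * (1 + ε - ε ^ 2))

/-!
For `R` uniform on `[1 - ε, 1 + ε]` the failure probability `g y = P(y R > 1 + ε)` only depends
on `c = (1 + ε) / (1 - ε)`: it vanishes for `y ≤ 1`, is the concave function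
`c (y - 1) / ((c - 1) y)` on `[1, c]` and equals `1` beyond `c`. Suppose a quadratic `l (y - a)²`
majorizes `g` and meets it at a point `b`. By independence
`P(Y R > 1 + ε) = E g(Y) ≤ l E (Y - a)² = l ((1 - a)² + Var Y)`, while the two-point `W` on
`{a, b}` with mean `1` and variance `α² ≥ Var Y` has
`l ((1 - a)² + α²) = l E (W - a)² ≤ E g(W) = P(W R' > 1 + ε)`. Such a quadratic exists: for
small `α` it is tangent to `g` at some `b ≤ c`, for large `α` it passes through the corner
`(c, 1)` of `g` with slope at most `g'(c)`.
-/

/-- `P(y U > 1)` for `U` uniform on `[1 / c, 1]`; with `c = (1 + ε) / (1 - ε)` this is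
`P(y R > 1 + ε)` for `R` uniform on `[1 - ε, 1 + ε]`. -/
noncomputable def uniformTail (c y : ℝ) : ℝ :=
  if y ≤ 1 then 0 else min 1 (c * (y - 1) / ((c - 1) * y))

section UniformTail

variable {c : ℝ}

lemma uniformTail_le_of_one_lt {y : ℝ} (hy : 1 < y) :
    uniformTail c y ≤ c * (y - 1) / ((c - 1) * y) := by
  rw [uniformTail, if_neg hy.not_ge]
  exact min_le_right _ _

lemma uniformTail_of_one_lt_of_le (hc : 1 < c) {y : ℝ} (hy : 1 < y) (hyc : y ≤ c) :
    uniformTail c y = c * (y - 1) / ((c - 1) * y) := by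
  rw [uniformTail, if_neg hy.not_ge, min_eq_right ((div_le_one (by nlinarith)).mpr _)]
  nlinarith

lemma uniformTail_self (hc : 1 < c) : uniformTail c c = 1 := by
  rw [uniformTail_of_one_lt_of_le hc hc le_rfl, div_eq_one_iff_eq (by nlinarith)]
  ring

lemma uniformTail_le_tangent_quadratic (hc : 1 < c) {s : ℝ} (hs : 1 < s) (y : ℝ) :
    uniformTail c y ≤
      c / ((c - 1) * (4 * s ^ 3 * (s - 1))) * (y - (3 * s - 2 * s ^ 2)) ^ 2 := by
  have hl : 0 ≤ c / ((c - 1) * (4 * s ^ 3 * (s - 1))) := by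
    have : 0 < s - 1 := by linarith
    positivity
  rcases le_or_gt y 1 with hy | hy
  · rw [uniformTail, if_pos hy]
    positivity
  refine (uniformTail_le_of_one_lt hy).trans ?_
  have hy0 : 0 < y := by linarith
  have hs1 : s - 1 ≠ 0 := by linarith
  have key : c / ((c - 1) * (4 * s ^ 3 * (s - 1))) * (y - (3 * s - 2 * s ^ 2)) ^ 2
      - c * (y - 1) / ((c - 1) * y)
      = c / ((c - 1) * (4 * s ^ 3 * (s - 1)) * y) * ((y - s) ^ 2 * (y + 4 * s * (s - 1))) := by
    have : c - 1 ≠ 0 := by linarith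
    field_simp
    ring
  have : 0 ≤ y + 4 * s * (s - 1) := by nlinarith
  have : 0 ≤ c / ((c - 1) * (4 * s ^ 3 * (s - 1)) * y) *
      ((y - s) ^ 2 * (y + 4 * s * (s - 1))) := by
    positivity
  linarith

/-- `ha` says that the quadratic, which equals `1` at `c`, is there no steeper than the tail,
whose left derivative at `c` is `1 / (c (c - 1))`. -/
lemma uniformTail_le_corner_quadratic (hc : 1 < c) {a : ℝ} (ha : 2 * c * (c - 1) ≤ c - a)
    (y : ℝ) : uniformTail c y ≤ 1 / (c - a) ^ 2 * (y - a) ^ 2 := by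
  have hd : 0 < c - a := by nlinarith
  rcases le_or_gt y 1 with hy | hy
  · rw [uniformTail, if_pos hy]
    positivity
  rw [one_div_mul_eq_div]
  rcases le_or_gt c y with hyc | hyc
  · rw [uniformTail, if_neg hy.not_ge]
    refine (min_le_left _ _).trans ((one_le_div (by positivity)).mpr ?_)
    nlinarith
  refine (uniformTail_le_of_one_lt hy).trans ?_
  rw [div_le_div_iff₀ (by nlinarith) (by positivity)]
  have key : (c - 1) * (y - a) ^ 2 * y - c * (c - a) ^ 2 * (y - 1)
      = (c - 1) * (y - c) ^ 2 * (y + 2 * (c - a))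
        + (c - a) * (2 * c * (c - 1) - (c - a)) * (y - c) := by
    ring
  have h1 : 0 ≤ (c - 1) * (y - c) ^ 2 * (y + 2 * (c - a)) := by
    have : 0 ≤ c - 1 := by linarith
    have : 0 ≤ y + 2 * (c - a) := by linarith
    positivity
  have h2 : 0 ≤ (c - a) * (2 * c * (c - 1) - (c - a)) * (y - c) :=
    mul_nonneg_of_nonpos_of_nonpos (mul_nonpos_of_nonneg_of_nonpos hd.le (by linarith))
      (by linarith)
  nlinarith

theorem exists_quadratic_majorant_uniformTail (hc : 1 < c) {α : ℝ} (hα : 0 < α) :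
    ∃ a b l : ℝ, a < 1 ∧ 1 < b ∧ (1 - a) * (b - 1) = α ^ 2 ∧ 0 ≤ l ∧
      (∀ y, uniformTail c y ≤ l * (y - a) ^ 2) ∧ l * (b - a) ^ 2 ≤ uniformTail c b := by
  rcases le_or_gt (α ^ 2) ((c - 1) ^ 2 * (2 * c - 1)) with hsmall | hlarge
  · obtain ⟨s, ⟨hs1, hsc⟩, hs⟩ :
        ∃ s ∈ Set.Icc 1 c, (s - 1) ^ 2 * (2 * s - 1) = α ^ 2 :=
      intermediate_value_Icc hc.le (by fun_prop) ⟨by simpa using sq_nonneg α, hsmall⟩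
    have hs1 : 1 < s := hs1.lt_of_ne <| by rintro rfl; nlinarith
    -- `1 - a = (2 s - 1) (s - 1)`, whence `(1 - a) (b - 1) = (2 s - 1) (s - 1)²`
    refine ⟨3 * s - 2 * s ^ 2, s, c / ((c - 1) * (4 * s ^ 3 * (s - 1))), by nlinarith,
      hs1, by rw [← hs]; ring, ?_, uniformTail_le_tangent_quadratic hc hs1, ?_⟩
    · have : 0 < c - 1 := by linarith
      have : 0 < s - 1 := by linarith
      positivity
    · rw [uniformTail_of_one_lt_of_le hc hs1 hsc]
      apply le_of_eq
      have : c - 1 ≠ 0 := by linarith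
      have : s - 1 ≠ 0 := by linarith
      field_simp
      ring
  · have hc1 : 0 < c - 1 := by linarith
    set a := 1 - α ^ 2 / (c - 1) with ha
    have hca : 2 * c * (c - 1) ≤ c - a := by
      rw [ha, ← sub_nonneg]
      have : c - (1 - α ^ 2 / (c - 1)) - 2 * c * (c - 1)
          = (α ^ 2 - (c - 1) ^ 2 * (2 * c - 1)) / (c - 1) := by
        field_simp
        ring
      rw [this]
      exact div_nonneg (by linarith) hc1.le
    have ha1 : a < 1 := by
      rw [ha, sub_lt_self_iff]
      positivity
    refine ⟨a, c, 1 / (c - a) ^ 2, ha1, hc, by rw [ha]; field_simp; ring, by positivity,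
      uniformTail_le_corner_quadratic hc hca, ?_⟩
    rw [uniformTail_self hc, one_div_mul_cancel]
    have : 0 < c - a := by nlinarith
    positivity

end UniformTail

lemma uniformIcc_apply (a b : ℝ) (s : Set ℝ) :
    uniformIcc a b s = (ENNReal.ofReal (b - a))⁻¹ * volume (s ∩ Set.Icc a b) := by
  simp [uniformIcc, Measure.restrict_apply']

lemma isProbabilityMeasure_uniformIcc {a b : ℝ} (h : a < b) :
    IsProbabilityMeasure (uniformIcc a b) := by
  constructor
  rw [uniformIcc_apply, Set.univ_inter, Real.volume_Icc,
    ENNReal.inv_mul_cancel (by simpa using h) ENNReal.ofReal_ne_top]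

lemma uniformIcc_compl_setOf_mul_le {ε : ℝ} (hε : ε ∈ Set.Ioo 0 1) (y : ℝ) :
    uniformIcc (1 - ε) (1 + ε) {r | y * r ≤ 1 + ε}ᶜ =
      ENNReal.ofReal (uniformTail ((1 + ε) / (1 - ε)) y) := by
  obtain ⟨hε0, hε1⟩ := hε
  simp only [Set.compl_ofPred, not_le]
  rw [uniformIcc_apply, uniformTail]
  split_ifs with hy
  · have hempty : {r | 1 + ε < y * r} ∩ Set.Icc (1 - ε) (1 + ε) = ∅ := by
      ext r
      simp only [Set.mem_inter_iff, Set.mem_ofPred_eq, Set.mem_Icc, Set.mem_empty_iff_false,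
        iff_false, not_and]
      intro h1 h2
      rcases le_total y 0 with hy0 | hy0 <;> nlinarith
    simp [hempty]
  have hy0 : 0 < y := by linarith
  set d := max ((1 + ε) / y) (1 - ε)
  have hsub : Set.Ioc d (1 + ε) ⊆ {r | 1 + ε < y * r} ∩ Set.Icc (1 - ε) (1 + ε) := by
    rintro r ⟨hdr, hr⟩
    rw [max_lt_iff, div_lt_iff₀ hy0] at hdr
    exact ⟨show 1 + ε < y * r from mul_comm r y ▸ hdr.1, hdr.2.le, hr⟩
  have hsup : {r | 1 + ε < y * r} ∩ Set.Icc (1 - ε) (1 + ε) ⊆ Set.Icc d (1 + ε) := by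
    rintro r ⟨hr, hr1, hr2⟩
    refine ⟨max_le ?_ hr1, hr2⟩
    rw [div_le_iff₀ hy0, mul_comm]
    exact hr.le
  have hvol :
      volume ({r | 1 + ε < y * r} ∩ Set.Icc (1 - ε) (1 + ε)) = ENNReal.ofReal (1 + ε - d) :=
    le_antisymm (Real.volume_Icc ▸ measure_mono hsup) (Real.volume_Ioc ▸ measure_mono hsub)
  rw [hvol, show 1 + ε - (1 - ε) = 2 * ε by ring,
    ← ENNReal.ofReal_inv_of_pos (by positivity), ← ENNReal.ofReal_mul (by positivity)]
  congr 1
  have hc : (1 + ε) / (1 - ε) * (y - 1) / (((1 + ε) / (1 - ε) - 1) * y)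
      = (1 + ε - (1 + ε) / y) / (2 * ε) := by
    have : 1 - ε ≠ 0 := by linarith
    rw [show (1 + ε) / (1 - ε) - 1 = 2 * ε / (1 - ε) by field_simp; ring]
    field_simp
  rw [hc, inv_mul_eq_div]
  rcases le_total ((1 + ε) / y) (1 - ε) with hd | hd
  · rw [show d = 1 - ε from max_eq_right hd, show 1 + ε - (1 - ε) = 2 * ε by ring,
      div_self (by positivity), min_eq_left ((one_le_div (by positivity)).mpr (by linarith))]
  · rw [show d = (1 + ε) / y from max_eq_left hd,
      min_eq_right ((div_le_one (by positivity)).mpr (by linarith))]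

noncomputable def twoPoint (m a b : ℝ) : Measure ℝ :=
  ENNReal.ofReal ((b - m) / (b - a)) • Measure.dirac a +
    ENNReal.ofReal ((m - a) / (b - a)) • Measure.dirac b

section TwoPoint

variable {m a b : ℝ}

lemma lintegral_twoPoint (f : ℝ → ENNReal) :
    ∫⁻ x, f x ∂twoPoint m a b =
      ENNReal.ofReal ((b - m) / (b - a)) * f a + ENNReal.ofReal ((m - a) / (b - a)) * f b := by
  simp [twoPoint, lintegral_add_measure, lintegral_smul_measure, lintegral_dirac]

lemma integral_twoPoint (ham : a ≤ m) (hmb : m ≤ b) (f : ℝ → ℝ) :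
    ∫ x, f x ∂twoPoint m a b = (b - m) / (b - a) * f a + (m - a) / (b - a) * f b := by
  have hp : 0 ≤ (b - m) / (b - a) := div_nonneg (by linarith) (by linarith)
  have hq : 0 ≤ (m - a) / (b - a) := div_nonneg (by linarith) (by linarith)
  rw [twoPoint, integral_add_measure, integral_smul_measure, integral_smul_measure,
    integral_dirac, integral_dirac, ENNReal.toReal_ofReal hp, ENNReal.toReal_ofReal hq,
    smul_eq_mul, smul_eq_mul]
  all_goals exact (integrable_dirac (by simp)).smul_measure ENNReal.ofReal_ne_top

lemma isProbabilityMeasure_twoPoint (ham : a < m) (hmb : m < b) :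
    IsProbabilityMeasure (twoPoint m a b) := by
  constructor
  have := lintegral_twoPoint (m := m) (a := a) (b := b) fun _ ↦ 1
  rw [lintegral_const, one_mul, mul_one, mul_one, ← ENNReal.ofReal_add
    (div_nonneg (by linarith) (by linarith)) (div_nonneg (by linarith) (by linarith)),
    ← add_div, sub_add_sub_cancel, div_self (by linarith), ENNReal.ofReal_one] at this
  exact this

lemma integral_id_twoPoint (ham : a < m) (hmb : m < b) : ∫ x, x ∂twoPoint m a b = m := by
  rw [integral_twoPoint ham.le hmb.le]
  field_simp [show b - a ≠ 0 by linarith]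
  ring

lemma variance_id_twoPoint (ham : a < m) (hmb : m < b) :
    Var[id; twoPoint m a b] = (m - a) * (b - m) := by
  rw [variance_eq_integral aemeasurable_id]
  simp only [id, integral_id_twoPoint ham hmb]
  rw [integral_twoPoint ham.le hmb.le]
  field_simp [show b - a ≠ 0 by linarith]
  ring

lemma twoPoint_singleton_left_ne_zero (ham : a < m) (hmb : m < b) : twoPoint m a b {a} ≠ 0 := by
  simp [twoPoint, hmb, ham.trans hmb]

lemma twoPoint_singleton_right_ne_zero (ham : a < m) (hmb : m < b) : twoPoint m a b {b} ≠ 0 := by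
  simp [twoPoint, ham, ham.trans hmb]

lemma twoPoint_pair (ham : a < m) (hmb : m < b) : twoPoint m a b {a, b} = 1 := by
  have := isProbabilityMeasure_twoPoint ham hmb
  rw [← measure_univ (μ := twoPoint m a b)]
  simp [twoPoint]

end TwoPoint

namespace ProbabilityTheory

variable {Ω : Type*} {mΩ : MeasurableSpace Ω} {P : Measure Ω}

lemma HasLaw.exists_two_values_of_twoPoint {m a b : ℝ} {W : Ω → ℝ}
    (hW : HasLaw W (twoPoint m a b) P) (ham : a < m) (hmb : m < b) :
    ∃ w₁ w₂ : ℝ, w₁ ≠ w₂ ∧ P {ω | W ω = w₁ ∨ W ω = w₂} = 1 ∧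
      P {ω | W ω = w₁} ≠ 0 ∧ P {ω | W ω = w₂} ≠ 0 := by
  refine ⟨a, b, (ham.trans hmb).ne, ?_, ?_, ?_⟩
  · exact (hW.measure_eq (p := fun x ↦ x = a ∨ x = b)
      ((measurableSet_singleton a).union (measurableSet_singleton b))).trans
      (twoPoint_pair ham hmb)
  · exact (hW.measure_eq (p := (· = a)) (measurableSet_singleton a)).trans_ne
      (twoPoint_singleton_left_ne_zero ham hmb)
  · exact (hW.measure_eq (p := (· = b)) (measurableSet_singleton b)).trans_ne
      (twoPoint_singleton_right_ne_zero ham hmb)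

lemma IndepFun.measure_preimage_eq_lintegral {α β : Type*} [MeasurableSpace α]
    [MeasurableSpace β] [IsFiniteMeasure P] {X : Ω → α} {Y : Ω → β} (hX : Measurable X)
    (hY : Measurable Y) (hXY : IndepFun X Y P) {S : Set (α × β)} (hS : MeasurableSet S) :
    P ((fun ω ↦ (X ω, Y ω)) ⁻¹' S) = ∫⁻ x, P.map Y (Prod.mk x ⁻¹' S) ∂P.map X := by
  rw [← Measure.map_apply (hX.prodMk hY) hS,
    (indepFun_iff_map_prod_eq_prod_map_map hX.aemeasurable hY.aemeasurable).1 hXY,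
    Measure.prod_apply hS]

lemma integral_sub_const_sq [IsProbabilityMeasure P] {Y : Ω → ℝ} (hY : MemLp Y 2 P) (a : ℝ) :
    ∫ ω, (Y ω - a) ^ 2 ∂P = (P[Y] - a) ^ 2 + Var[Y; P] := by
  have hYa : MemLp (fun ω ↦ Y ω - a) 2 P := hY.sub (memLp_const a)
  have h := variance_eq_sub hYa
  rw [variance_sub_const hY.aestronglyMeasurable,
    integral_sub (hY.integrable one_le_two) (integrable_const a)] at h
  simp only [integral_const, probReal_univ, smul_eq_mul, one_mul, Pi.pow_apply] at h
  linarith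

lemma lintegral_map_le_of_le_quadratic [IsProbabilityMeasure P] {Y : Ω → ℝ} (hY : MemLp Y 2 P)
    {g : ℝ → ENNReal} (hg : Measurable g) {l a : ℝ} (hl : 0 ≤ l)
    (hgl : ∀ y, g y ≤ ENNReal.ofReal (l * (y - a) ^ 2)) :
    ∫⁻ y, g y ∂P.map Y ≤ ENNReal.ofReal (l * ((P[Y] - a) ^ 2 + Var[Y; P])) := by
  rw [lintegral_map' hg.aemeasurable hY.aemeasurable, ← integral_sub_const_sq hY,
    ← integral_const_mul, ofReal_integral_eq_lintegral_ofReal]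
  · exact lintegral_mono fun ω ↦ hgl (Y ω)
  · exact ((hY.sub (memLp_const a)).integrable_sq).const_mul l
  · exact .of_forall fun ω ↦ by positivity

theorem measure_preimage_le_twoPoint_prod [IsProbabilityMeasure P] {Y R : Ω → ℝ}
    (hY : MemLp Y 2 P) (hYm : Measurable Y) (hRm : Measurable R) (hYR : IndepFun Y R P)
    {S : Set (ℝ × ℝ)} (hS : MeasurableSet S) {m a b l : ℝ} (hm : P[Y] = m) (ham : a < m)
    (hmb : m < b) (hvar : Var[Y; P] ≤ (m - a) * (b - m)) (hl : 0 ≤ l)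
    (hmaj : ∀ y, P.map R (Prod.mk y ⁻¹' S) ≤ ENNReal.ofReal (l * (y - a) ^ 2))
    (htouch : ENNReal.ofReal (l * (b - a) ^ 2) ≤ P.map R (Prod.mk b ⁻¹' S)) :
    P ((fun ω ↦ (Y ω, R ω)) ⁻¹' S) ≤ ((twoPoint m a b).prod (P.map R)) S := by
  rw [hYR.measure_preimage_eq_lintegral hYm hRm hS, Measure.prod_apply hS, lintegral_twoPoint]
  have hweight :
      l * ((m - a) ^ 2 + (m - a) * (b - m)) = (m - a) / (b - a) * (l * (b - a) ^ 2) := by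
    field_simp [show b - a ≠ 0 by linarith]
    ring
  calc ∫⁻ y, P.map R (Prod.mk y ⁻¹' S) ∂P.map Y
      ≤ ENNReal.ofReal (l * ((m - a) ^ 2 + Var[Y; P])) :=
        hm ▸ lintegral_map_le_of_le_quadratic hY (measurable_measure_prodMk_left hS) hl hmaj
    _ ≤ ENNReal.ofReal ((m - a) / (b - a)) * ENNReal.ofReal (l * (b - a) ^ 2) := by
        rw [← ENNReal.ofReal_mul (div_nonneg (by linarith) (by linarith)), ← hweight]
        gcongr
    _ ≤ ENNReal.ofReal ((m - a) / (b - a)) * P.map R (Prod.mk b ⁻¹' S) := by gcongr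
    _ ≤ _ := le_add_self

theorem twoPoint_prod_le_measure_preimage [IsProbabilityMeasure P] {Y R : Ω → ℝ}
    (hY : MemLp Y 2 P) (hYm : Measurable Y) (hRm : Measurable R) (hYR : IndepFun Y R P)
    {S : Set (ℝ × ℝ)} (hS : MeasurableSet S) {m a b l : ℝ} (hm : P[Y] = m) (ham : a < m)
    (hmb : m < b) (hvar : Var[Y; P] ≤ (m - a) * (b - m)) (hl : 0 ≤ l)
    (hmaj : ∀ y, P.map R (Prod.mk y ⁻¹' Sᶜ) ≤ ENNReal.ofReal (l * (y - a) ^ 2))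
    (htouch : ENNReal.ofReal (l * (b - a) ^ 2) ≤ P.map R (Prod.mk b ⁻¹' Sᶜ)) :
    ((twoPoint m a b).prod (P.map R)) S ≤ P ((fun ω ↦ (Y ω, R ω)) ⁻¹' S) := by
  have := isProbabilityMeasure_twoPoint ham hmb
  have := Measure.isProbabilityMeasure_map (μ := P) hRm.aemeasurable
  rw [← compl_compl S, prob_compl_eq_one_sub hS.compl, Set.preimage_compl,
    prob_compl_eq_one_sub ((hYm.prodMk hRm) hS.compl)]
  exact tsub_le_tsub_left (measure_preimage_le_twoPoint_prod hY hYm hRm hYR hS.compl hm ham hmb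
    hvar hl hmaj htouch) 1

end ProbabilityTheory

/-- For `ε ∈ (0,1)`, `α > 0`, `Y` square-integrable with mean 1 and
standard deviation at most `α`, and `R` uniform on `[1−ε,1+ε]` independent of `Y`,
there exists a two-valued random variable `W` with mean 1, standard deviation exactly
`α`, independent of a uniform `R′` on `[1−ε,1+ε]`, with
`P(WR′ ≤ 1+ε) ≤ P(YR ≤ 1+ε)`. -/
theorem two_point_worst_case {Ω : Type*} [MeasureSpace Ω]
    [IsProbabilityMeasure (ℙ : Measure Ω)]
    (ε α : ℝ) (hε : ε ∈ Set.Ioo (0 : ℝ) 1) (hα : 0 < α)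
    (Y R : Ω → ℝ) (hYm : Measurable Y) (hRm : Measurable R)
    (hY2 : MemLp Y 2 ℙ)
    (hmean : ∫ ω, Y ω ∂ℙ = 1)
    (hsd : Real.sqrt (variance Y ℙ) ≤ α)
    (hR : Measure.map R ℙ = uniformIcc (1 - ε) (1 + ε))
    (hindep : IndepFun Y R ℙ) :
    ∃ (Ω' : Type) (_ : MeasureSpace Ω'),
      IsProbabilityMeasure (ℙ : Measure Ω') ∧
      ∃ W R' : Ω' → ℝ,
        Measurable W ∧ Measurable R' ∧
        Measure.map R' (ℙ : Measure Ω') = uniformIcc (1 - ε) (1 + ε) ∧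
        IndepFun W R' ℙ ∧
        (∃ w₁ w₂ : ℝ, w₁ ≠ w₂ ∧
          (ℙ : Measure Ω') {ω | W ω = w₁ ∨ W ω = w₂} = 1 ∧
          (ℙ : Measure Ω') {ω | W ω = w₁} ≠ 0 ∧
          (ℙ : Measure Ω') {ω | W ω = w₂} ≠ 0) ∧
        (∫ ω, W ω ∂(ℙ : Measure Ω')) = 1 ∧
        Real.sqrt (variance W (ℙ : Measure Ω')) = α ∧
        (ℙ : Measure Ω') {ω | W ω * R' ω ≤ 1 + ε} ≤ ℙ {ω | Y ω * R ω ≤ 1 + ε} := by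
  obtain ⟨hε0, hε1⟩ := hε
  have hc : 1 < (1 + ε) / (1 - ε) := by rw [one_lt_div (by linarith)]; linarith
  obtain ⟨a, b, l, ha, hb, hab, hl, hmaj, htouch⟩ :=
    exists_quadratic_majorant_uniformTail hc hα
  have := isProbabilityMeasure_uniformIcc (show 1 - ε < 1 + ε by linarith)
  have := isProbabilityMeasure_twoPoint ha hb
  have hR' := uniformIcc_compl_setOf_mul_le ⟨hε0, hε1⟩
  rw [← hR] at hR'
  have hcmp := twoPoint_prod_le_measure_preimage hY2 hYm hRm hindep
    (S := {z | z.1 * z.2 ≤ 1 + ε})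
    (measurableSet_le (by fun_prop) measurable_const) hmean ha hb
    (by rw [hab, ← Real.sqrt_le_left hα.le]; exact hsd) hl
    (fun y ↦ (hR' y).trans_le (ENNReal.ofReal_le_ofReal (hmaj y)))
    ((ENNReal.ofReal_le_ofReal htouch).trans_eq (hR' b).symm)
  rw [hR] at hcmp
  set P' := (twoPoint 1 a b).prod (uniformIcc (1 - ε) (1 + ε))
  have hW : HasLaw Prod.fst (twoPoint 1 a b) P' :=
    ⟨measurable_fst.aemeasurable, measurePreserving_fst.map_eq⟩
  have hvarW : Var[Prod.fst; P'] = α ^ 2 := by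
    rw [hW.variance_eq, variance_id_twoPoint ha hb, hab]
  exact ⟨ℝ × ℝ, ⟨P'⟩, (inferInstance : IsProbabilityMeasure P'), Prod.fst, Prod.snd,
    measurable_fst, measurable_snd, measurePreserving_snd.map_eq,
    indepFun_prod measurable_id measurable_id, hW.exists_two_values_of_twoPoint ha hb,
    hW.integral_eq.trans (integral_id_twoPoint ha hb),
    (congrArg Real.sqrt hvarW).trans (Real.sqrt_sq hα.le), hcmp⟩
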